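/- arXiv:0808.3685 — 4 statements merged into one kernel-verified Lean document; each statement's English description precedes it below -/
import Mathlib

section
/- Let (λ_k)_{k≥1} be a strictly increasing sequence of positive reals, let β > 0 and Γ > 0, and let c = (c_k)_{k≥1} be a real sequence with Σ_k λ_k² c_k² < ∞. Suppose c satisfies, for every k, the equation β λ_k² c_k + (Σ_j λ_j c_j² − Γ) λ_k c_k = 0. Then either c_k = 0 for all k, or there exists exactly one index k with c_k ≠ 0; in the latter case necessarily Γ > β λ_k and c_k = ±√((Γ − β λ_k)/λ_k). In particular, if N₀ is the largest integer with Γ > β λ_{N₀}, the set of such sequences c is finite, consisting of the zero sequence and the 2N₀ sequences with a single nonzero entry c_k = ±√((Γ − β λ_k)/λ_k) for k = 1,…,N₀. -/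
/-!
If `c_k ≠ 0`, dividing the `k`-th equation by `λ_k c_k` gives `β λ_k = Γ − Σ_j λ_j c_j²`, whose
right-hand side does not depend on `k`. As `λ` is injective and `β ≠ 0`, at most one `c_k` is
nonzero, and for `c = c_k e_k` the equation reduces to `λ_k c_k² = Γ − β λ_k`.
-/

open Function

def IsBergerStationary (lam : ℕ → ℝ) (β Γ : ℝ) (c : ℕ → ℝ) : Prop :=
  ∀ k, β * lam k ^ 2 * c k + ((∑' j, lam j * c j ^ 2) - Γ) * (lam k * c k) = 0

lemma mul_sq_pi_single (f : ℕ → ℝ) (k : ℕ) (a : ℝ) :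
    (fun j => f j * (Pi.single k a : ℕ → ℝ) j ^ 2) = Pi.single k (f k * a ^ 2) :=
  funext <| Pi.apply_single (fun j x => f j * x ^ 2) (fun _ => by ring) k a

lemma tsum_mul_sq_pi_single (f : ℕ → ℝ) (k : ℕ) (a : ℝ) :
    ∑' j, f j * (Pi.single k a : ℕ → ℝ) j ^ 2 = f k * a ^ 2 := by
  rw [mul_sq_pi_single, tsum_pi_single]

lemma summable_mul_sq_pi_single (f : ℕ → ℝ) (k : ℕ) (a : ℝ) :
    Summable fun j => f j * (Pi.single k a : ℕ → ℝ) j ^ 2 := by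
  rw [mul_sq_pi_single]
  exact (hasSum_pi_single k _).summable

lemma mul_sq_eq_sub_and_ne_zero_iff {l a : ℝ} (β Γ : ℝ) (hl : 0 < l) :
    l * a ^ 2 = Γ - β * l ∧ a ≠ 0 ↔
      β * l < Γ ∧ (a = √((Γ - β * l) / l) ∨ a = -√((Γ - β * l) / l)) := by
  have hmul : l * a ^ 2 = Γ - β * l ↔ a ^ 2 = (Γ - β * l) / l := by
    rw [eq_div_iff hl.ne', mul_comm]
  constructor
  · rintro ⟨ha, ha0⟩
    have hsq : 0 < a ^ 2 := by positivity
    have hlt : β * l < Γ := by nlinarith [mul_pos hl hsq]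
    refine ⟨hlt, sq_eq_sq_iff_eq_or_eq_neg.1 ?_⟩
    rw [Real.sq_sqrt (div_nonneg (sub_nonneg.2 hlt.le) hl.le)]
    exact hmul.1 ha
  · rintro ⟨hlt, ha⟩
    have hx : 0 < (Γ - β * l) / l := div_pos (sub_pos.2 hlt) hl
    have hroot : √((Γ - β * l) / l) ≠ 0 := (Real.sqrt_pos.2 hx).ne'
    rw [hmul]
    rcases ha with rfl | rfl
    · exact ⟨Real.sq_sqrt hx.le, hroot⟩
    · exact ⟨by rw [neg_sq, Real.sq_sqrt hx.le], neg_ne_zero.2 hroot⟩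

section

variable {lam : ℕ → ℝ} {β Γ : ℝ} {c : ℕ → ℝ}

namespace IsBergerStationary

lemma mul_eq_sub_tsum (h : IsBergerStationary lam β Γ c) {k : ℕ} (hlam : lam k ≠ 0) (hc : c k ≠ 0) :
    β * lam k = Γ - ∑' j, lam j * c j ^ 2 := by
  have hfactor : lam k * c k * (β * lam k - (Γ - ∑' j, lam j * c j ^ 2)) = 0 := by
    linear_combination h k
  simpa [hlam, hc, sub_eq_zero] using hfactor

lemma eq_pi_single (h : IsBergerStationary lam β Γ c) (hβ : β ≠ 0) (hlam : ∀ k, lam k ≠ 0)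
    (hinj : Injective lam) {k : ℕ} (hc : c k ≠ 0) : c = Pi.single k (c k) := by
  funext j
  rcases eq_or_ne j k with rfl | hjk
  · simp
  rw [Pi.single_eq_of_ne hjk]
  by_contra hcj
  have hlam : β * lam j = β * lam k := by
    rw [h.mul_eq_sub_tsum (hlam j) hcj, h.mul_eq_sub_tsum (hlam k) hc]
  exact hjk (hinj (mul_left_cancel₀ hβ hlam))

end IsBergerStationary

lemma isBergerStationary_pi_single_iff {k : ℕ} {a : ℝ} (hlam : lam k ≠ 0) :
    IsBergerStationary lam β Γ (Pi.single k a) ↔ lam k * a ^ 2 = Γ - β * lam k ∨ a = 0 := by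
  unfold IsBergerStationary
  rw [tsum_mul_sq_pi_single]
  constructor
  · intro h
    have hfactor : lam k * a * (lam k * a ^ 2 - (Γ - β * lam k)) = 0 := by
      have hk : β * lam k ^ 2 * a + (lam k * a ^ 2 - Γ) * (lam k * a) = 0 := by simpa using h k
      linear_combination hk
    simpa [hlam, sub_eq_zero, or_comm] using hfactor
  · intro ha m
    rcases eq_or_ne m k with rfl | hmk
    · rcases ha with ha | rfl
      · simp only [Pi.single_eq_same]
        linear_combination lam m * a * ha
      · simp
    · simp [Pi.single_eq_of_ne hmk]

lemma IsBergerStationary.lt_and_eq_sqrt (h : IsBergerStationary lam β Γ c) (hβ : β ≠ 0)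
    (hpos : ∀ k, 0 < lam k) (hinj : Injective lam) {k : ℕ} (hc : c k ≠ 0) :
    β * lam k < Γ ∧ (c k = √((Γ - β * lam k) / lam k) ∨ c k = -√((Γ - β * lam k) / lam k)) := by
  have hsingle : IsBergerStationary lam β Γ (Pi.single k (c k)) :=
    h.eq_pi_single hβ (fun j => (hpos j).ne') hinj hc ▸ h
  have hsq := ((isBergerStationary_pi_single_iff (hpos k).ne').1 hsingle).resolve_right hc
  exact (mul_sq_eq_sub_and_ne_zero_iff β Γ (hpos k)).1 ⟨hsq, hc⟩

theorem isBergerStationary_iff (hβ : β ≠ 0) (hpos : ∀ k, 0 < lam k) (hinj : Injective lam) :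
    IsBergerStationary lam β Γ c ↔ c = 0 ∨ ∃ k, β * lam k < Γ ∧
      (c = Pi.single k √((Γ - β * lam k) / lam k) ∨
        c = Pi.single k (-√((Γ - β * lam k) / lam k))) := by
  constructor
  · intro h
    by_cases hc : c = 0
    · exact Or.inl hc
    obtain ⟨k, hk⟩ := Function.ne_iff.1 hc
    have hsingle := h.eq_pi_single hβ (fun j => (hpos j).ne') hinj hk
    obtain ⟨hlt, hval⟩ := h.lt_and_eq_sqrt hβ hpos hinj hk
    exact Or.inr ⟨k, hlt, hval.imp (fun h' => hsingle.trans (congrArg _ h'))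
      (fun h' => hsingle.trans (congrArg _ h'))⟩
  · rintro (rfl | ⟨k, hlt, rfl | rfl⟩)
    · intro k
      simp
    all_goals
      exact (isBergerStationary_pi_single_iff (hpos k).ne').2 <| Or.inl
        ((mul_sq_eq_sub_and_ne_zero_iff β Γ (hpos k)).2 ⟨hlt, by simp⟩).1

lemma setOf_summable_and_isBergerStationary_eq (hβ : β ≠ 0) (hpos : ∀ k, 0 < lam k)
    (hinj : Injective lam) {N₀ : ℕ} (hN₀ : ∀ k, β * lam k < Γ ↔ k ≤ N₀) :
    {c' : ℕ → ℝ | (Summable fun k => lam k ^ 2 * c' k ^ 2) ∧ IsBergerStationary lam β Γ c'} =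
      insert 0 {c' | ∃ k ≤ N₀, c' = Pi.single k √((Γ - β * lam k) / lam k) ∨
        c' = Pi.single k (-√((Γ - β * lam k) / lam k))} := by
  ext c'
  simp only [Set.mem_ofPred_eq, Set.mem_insert_iff, ← hN₀, isBergerStationary_iff hβ hpos hinj]
  refine and_iff_right_of_imp ?_
  rintro (rfl | ⟨k, -, rfl | rfl⟩)
  · simp [summable_zero]
  all_goals exact summable_mul_sq_pi_single _ k _

end

lemma Set.finite_exists_le_eq_or_eq {α : Type*} (f g : ℕ → α) (N : ℕ) :
    {x | ∃ k ≤ N, x = f k ∨ x = g k}.Finite := by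
  refine ((Set.finite_Iic N).biUnion fun k _ => Set.toFinite ({f k, g k} : Set α)).subset ?_
  rintro x ⟨k, hk, hx⟩
  exact Set.mem_biUnion hk hx

theorem stmt_8_general
    (lam : ℕ → ℝ) (hpos : ∀ k, 0 < lam k) (hmono : StrictMono lam)
    (β Γ : ℝ) (hβ : 0 < β)
    (c : ℕ → ℝ)
    (heq : ∀ k, β * lam k ^ 2 * c k + ((∑' j, lam j * c j ^ 2) - Γ) * (lam k * c k) = 0) :
    ((∀ k, c k = 0) ∨
      ∃ k, c k ≠ 0 ∧ (∀ j, j ≠ k → c j = 0) ∧ β * lam k < Γ ∧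
        (c k = Real.sqrt ((Γ - β * lam k) / lam k) ∨
          c k = -Real.sqrt ((Γ - β * lam k) / lam k))) ∧
    ∀ N₀ : ℕ, (∀ k, β * lam k < Γ ↔ k ≤ N₀) →
      ({c' : ℕ → ℝ | (Summable fun k => lam k ^ 2 * c' k ^ 2) ∧
          ∀ k, β * lam k ^ 2 * c' k + ((∑' j, lam j * c' j ^ 2) - Γ) * (lam k * c' k) = 0}
        = insert (0 : ℕ → ℝ)
            {c' : ℕ → ℝ | ∃ k ≤ N₀,
              c' = Pi.single k (Real.sqrt ((Γ - β * lam k) / lam k)) ∨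
              c' = Pi.single k (-Real.sqrt ((Γ - β * lam k) / lam k))}) ∧
      Set.Finite {c' : ℕ → ℝ | (Summable fun k => lam k ^ 2 * c' k ^ 2) ∧
          ∀ k, β * lam k ^ 2 * c' k + ((∑' j, lam j * c' j ^ 2) - Γ) * (lam k * c' k) = 0} := by
  have hinj := hmono.injective
  have hstat : IsBergerStationary lam β Γ c := heq
  refine ⟨?_, fun N₀ hN₀ => ?_⟩
  · by_cases hc : ∀ k, c k = 0
    · exact Or.inl hc
    push Not at hc
    obtain ⟨k, hk⟩ := hc
    refine Or.inr ⟨k, hk, fun j hj => ?_, hstat.lt_and_eq_sqrt hβ.ne' hpos hinj hk⟩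
    rw [hstat.eq_pi_single hβ.ne' (fun j => (hpos j).ne') hinj hk, Pi.single_eq_of_ne hj]
  have hset := setOf_summable_and_isBergerStationary_eq hβ.ne' hpos hinj hN₀
  refine ⟨hset, ?_⟩
  change Set.Finite {c' | _ ∧ IsBergerStationary lam β Γ c'}
  rw [hset]
  exact (Set.finite_exists_le_eq_or_eq _ _ N₀).insert 0

/-- Classification of stationary points of the Berger plate with `M(z) = z − Γ`, `p = 0`,
in eigenbasis coordinates: a square-summable (with weight `λ_k²`) solution of
`β λ_k² c_k + (Σ_j λ_j c_j² − Γ) λ_k c_k = 0` is either zero or has exactly one nonzero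
entry `c_k = ±√((Γ − βλ_k)/λ_k)`, possible only when `Γ > βλ_k`; and if `N₀` is the
largest index with `Γ > βλ_{N₀}`, the set of all such sequences is exactly the zero
sequence together with the finitely many single-entry sequences, in particular finite. -/
theorem stmt_8
    (lam : ℕ → ℝ) (hpos : ∀ k, 0 < lam k) (hmono : StrictMono lam)
    (β Γ : ℝ) (hβ : 0 < β) (hΓ : 0 < Γ)
    (c : ℕ → ℝ) (hsum : Summable fun k => lam k ^ 2 * c k ^ 2)
    (heq : ∀ k, β * lam k ^ 2 * c k + ((∑' j, lam j * c j ^ 2) - Γ) * (lam k * c k) = 0) :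
    ((∀ k, c k = 0) ∨
      ∃ k, c k ≠ 0 ∧ (∀ j, j ≠ k → c j = 0) ∧ β * lam k < Γ ∧
        (c k = Real.sqrt ((Γ - β * lam k) / lam k) ∨
          c k = -Real.sqrt ((Γ - β * lam k) / lam k))) ∧
    ∀ N₀ : ℕ, (∀ k, β * lam k < Γ ↔ k ≤ N₀) →
      ({c' : ℕ → ℝ | (Summable fun k => lam k ^ 2 * c' k ^ 2) ∧
          ∀ k, β * lam k ^ 2 * c' k + ((∑' j, lam j * c' j ^ 2) - Γ) * (lam k * c' k) = 0}
        = insert (0 : ℕ → ℝ)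
            {c' : ℕ → ℝ | ∃ k ≤ N₀,
              c' = Pi.single k (Real.sqrt ((Γ - β * lam k) / lam k)) ∨
              c' = Pi.single k (-Real.sqrt ((Γ - β * lam k) / lam k))}) ∧
      Set.Finite {c' : ℕ → ℝ | (Summable fun k => lam k ^ 2 * c' k ^ 2) ∧
          ∀ k, β * lam k ^ 2 * c' k + ((∑' j, lam j * c' j ^ 2) - Γ) * (lam k * c' k) = 0} :=
  stmt_8_general lam hpos hmono β Γ hβ c heq
end

section
/- Let H be a real inner product space, let A : H → H be a continuous linear operator that is symmetric (⟨Au, v⟩ = ⟨u, Av⟩) and satisfies ⟨Au, u⟩ ≥ λ₁ ‖u‖² for all u ∈ H with some λ₁ > 0, let M : ℝ → ℝ be continuously differentiable, let p ∈ H, and define B(u) = M(⟨Au,u⟩) A u − p. Then for every R > 0 there exists C_R > 0 such that for all u¹, u² ∈ H with ‖Au¹‖ ≤ R and ‖Au²‖ ≤ R, setting z = u¹ − u², the quantity Q₀ = ∫₀¹ ⟨B(u² + λ z) − B(u²), z⟩ dλ satisfies |Q₀| ≤ C_R ‖Az‖ ‖z‖. -/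
/-!
On the set `{u | ‖A u‖ ≤ R}` coercivity gives `‖u‖ ≤ R / λ₁`, so `⟨A u, u⟩` stays in the
compact interval `[-R² / λ₁, R² / λ₁]`, where the locally Lipschitz function `M` is bounded
and Lipschitz. Splitting
`B v - B w = M(⟨A v, v⟩) A (v - w) + (M(⟨A v, v⟩) - M(⟨A w, w⟩)) A w`
then shows that `‖B v - B w‖ ≤ C_R ‖A (v - w)‖` on that set. The set is convex, so it contains
the segment from `u²` to `u¹`, and the integrand of `Q₀` is bounded pointwise by
`C_R ‖A z‖ ‖z‖`.
-/

open Set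
open scoped RealInnerProductSpace

section

variable {H : Type*} [NormedAddCommGroup H] [InnerProductSpace ℝ H]

noncomputable def bergerForce (A : H →L[ℝ] H) (M : ℝ → ℝ) (p u : H) : H :=
  M ⟪A u, u⟫ • A u - p

lemma norm_le_norm_apply_div_of_coercive {A : H → H} {lam₁ : ℝ} (hlam₁ : 0 < lam₁)
    (hcoer : ∀ u, lam₁ * ‖u‖ ^ 2 ≤ ⟪A u, u⟫) (u : H) : ‖u‖ ≤ ‖A u‖ / lam₁ := by
  rw [le_div_iff₀ hlam₁]
  rcases (norm_nonneg u).eq_or_lt with hu | hu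
  · rw [← hu, zero_mul]
    exact norm_nonneg _
  · refine le_of_mul_le_mul_right ?_ hu
    calc ‖u‖ * lam₁ * ‖u‖ = lam₁ * ‖u‖ ^ 2 := by ring
      _ ≤ ‖A u‖ * ‖u‖ := (hcoer u).trans (real_inner_le_norm _ _)

lemma abs_inner_apply_self_le_of_coercive {A : H → H} {lam₁ R : ℝ} (hlam₁ : 0 < lam₁)
    (hcoer : ∀ u, lam₁ * ‖u‖ ^ 2 ≤ ⟪A u, u⟫) {u : H} (hu : ‖A u‖ ≤ R) :
    |⟪A u, u⟫| ≤ R ^ 2 / lam₁ :=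
  calc |⟪A u, u⟫| ≤ ‖A u‖ * ‖u‖ := abs_real_inner_le_norm _ _
    _ ≤ R * (R / lam₁) :=
      mul_le_mul hu ((norm_le_norm_apply_div_of_coercive hlam₁ hcoer u).trans (by gcongr))
        (norm_nonneg _) ((norm_nonneg _).trans hu)
    _ = R ^ 2 / lam₁ := by ring

lemma inner_apply_self_sub_inner_apply_self (A : H →L[ℝ] H) (v w : H) :
    ⟪A v, v⟫ - ⟪A w, w⟫ = ⟪A v, v - w⟫ + ⟪A (v - w), w⟫ := by
  simp only [inner_sub_right, inner_sub_left, map_sub]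
  ring

lemma bergerForce_sub (A : H →L[ℝ] H) (M : ℝ → ℝ) (p v w : H) :
    bergerForce A M p v - bergerForce A M p w =
      M ⟪A v, v⟫ • A (v - w) + (M ⟪A v, v⟫ - M ⟪A w, w⟫) • A w := by
  simp only [bergerForce, map_sub]
  module

lemma exists_norm_bergerForce_sub_le (A : H →L[ℝ] H) {lam₁ : ℝ} (hlam₁ : 0 < lam₁)
    (hcoer : ∀ u, lam₁ * ‖u‖ ^ 2 ≤ ⟪A u, u⟫) {M : ℝ → ℝ} (hM : LocallyLipschitz M) (p : H)
    (R : ℝ) :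
    ∃ C > 0, ∀ v w, ‖A v‖ ≤ R → ‖A w‖ ≤ R →
      ‖bergerForce A M p v - bergerForce A M p w‖ ≤ C * ‖A (v - w)‖ := by
  set K := R ^ 2 / lam₁
  obtain ⟨M₀, hM₀⟩ := (isCompact_Icc (a := -K) (b := K)).exists_bound_of_continuousOn
    hM.continuous.continuousOn
  obtain ⟨L, hL⟩ :=
    (hM.locallyLipschitzOn (s := Icc (-K) K)).exists_lipschitzOnWith_of_compact isCompact_Icc
  refine ⟨max M₀ 1 + 2 * L * R ^ 2 / lam₁, by positivity, fun v w hv hw => ?_⟩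
  have hR : 0 ≤ R := (norm_nonneg _).trans hv
  have hmem : ∀ u, ‖A u‖ ≤ R → ⟪A u, u⟫ ∈ Icc (-K) K := fun u hu =>
    abs_le.mp (abs_inner_apply_self_le_of_coercive hlam₁ hcoer hu)
  have hMv : |M ⟪A v, v⟫| ≤ max M₀ 1 := (hM₀ _ (hmem v hv)).trans (le_max_left _ _)
  have hquad : |⟪A v, v⟫ - ⟪A w, w⟫| ≤ 2 * R / lam₁ * ‖A (v - w)‖ := by
    have hvw := norm_le_norm_apply_div_of_coercive hlam₁ hcoer (v - w)
    have hw' := norm_le_norm_apply_div_of_coercive hlam₁ hcoer w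
    rw [inner_apply_self_sub_inner_apply_self]
    calc _ ≤ ‖A v‖ * ‖v - w‖ + ‖A (v - w)‖ * ‖w‖ :=
          (abs_add_le _ _).trans (add_le_add (abs_real_inner_le_norm _ _)
            (abs_real_inner_le_norm _ _))
      _ ≤ R * (‖A (v - w)‖ / lam₁) + ‖A (v - w)‖ * (R / lam₁) := by
          gcongr
          exact hw'.trans (by gcongr)
      _ = 2 * R / lam₁ * ‖A (v - w)‖ := by ring
  have hMdiff : |M ⟪A v, v⟫ - M ⟪A w, w⟫| ≤ L * (2 * R / lam₁ * ‖A (v - w)‖) := by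
    have := hL.dist_le_mul _ (hmem v hv) _ (hmem w hw)
    rw [Real.dist_eq, Real.dist_eq] at this
    exact this.trans (by gcongr)
  rw [bergerForce_sub]
  calc _ ≤ |M ⟪A v, v⟫| * ‖A (v - w)‖ + |M ⟪A v, v⟫ - M ⟪A w, w⟫| * ‖A w‖ :=
        (norm_add_le _ _).trans_eq <| by
          rw [norm_smul, norm_smul, Real.norm_eq_abs, Real.norm_eq_abs]
    _ ≤ max M₀ 1 * ‖A (v - w)‖ + L * (2 * R / lam₁ * ‖A (v - w)‖) * R := by gcongr
    _ = (max M₀ 1 + 2 * L * R ^ 2 / lam₁) * ‖A (v - w)‖ := by ring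

end

theorem stmt_13_general
    (H : Type*) [NormedAddCommGroup H] [InnerProductSpace ℝ H]
    (A : H →L[ℝ] H)
    (lam₁ : ℝ) (hlam₁ : 0 < lam₁)
    (hcoer : ∀ u : H, lam₁ * ‖u‖ ^ 2 ≤ (inner ℝ (A u) u : ℝ))
    (M : ℝ → ℝ) (hM : ContDiff ℝ 1 M) (p : H)
    (B : H → H) (hB : ∀ u : H, B u = M (inner ℝ (A u) u : ℝ) • A u - p) :
    ∀ R > (0:ℝ), ∃ C > (0:ℝ), ∀ u₁ u₂ : H,
      ‖A u₁‖ ≤ R → ‖A u₂‖ ≤ R →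
      |∫ l in (0:ℝ)..1, (inner ℝ (B (u₂ + l • (u₁ - u₂)) - B u₂) (u₁ - u₂) : ℝ)|
        ≤ C * ‖A (u₁ - u₂)‖ * ‖u₁ - u₂‖ := by
  intro R _
  obtain ⟨C, hC, hBlip⟩ :=
    exists_norm_bergerForce_sub_le A hlam₁ hcoer hM.locallyLipschitz p R
  refine ⟨C, hC, fun u₁ u₂ h₁ h₂ => ?_⟩
  obtain rfl : B = bergerForce A M p := funext hB
  set z := u₁ - u₂
  have hpt : ∀ l ∈ uIoc (0 : ℝ) 1,
      ‖⟪bergerForce A M p (u₂ + l • z) - bergerForce A M p u₂, z⟫‖ ≤ C * ‖A z‖ * ‖z‖ := by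
    intro l hl
    rw [uIoc_of_le zero_le_one] at hl
    have hseg : ‖A (u₂ + l • z)‖ ≤ R := by
      have := (convex_closedBall (0 : H) R).add_smul_sub_mem (mem_closedBall_zero_iff.2 h₂)
        (mem_closedBall_zero_iff.2 h₁) ⟨hl.1.le, hl.2⟩
      simpa [z, map_sub] using this
    calc _ ≤ ‖bergerForce A M p (u₂ + l • z) - bergerForce A M p u₂‖ * ‖z‖ :=
          norm_inner_le_norm _ _
      _ ≤ C * ‖A (l • z)‖ * ‖z‖ := by
          gcongr
          simpa using hBlip _ _ hseg h₂
      _ ≤ C * ‖A z‖ * ‖z‖ := by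
          rw [map_smul, norm_smul, Real.norm_of_nonneg hl.1.le]
          gcongr
          exact mul_le_of_le_one_left (norm_nonneg _) hl.2
  simpa using intervalIntegral.norm_integral_le_of_norm_le_const hpt

/-- Bound `|Q₀| ≤ C_R ‖Az‖ ‖z‖` for the compensator
`Q₀ = ∫₀¹ ⟨B(u² + λz) − B(u²), z⟩ dλ`, `z = u¹ − u²`, where
`B(u) = M(⟨Au,u⟩) Au − p` is the Berger nonlinearity, `A` symmetric and coercive. -/
theorem stmt_13
    (H : Type*) [NormedAddCommGroup H] [InnerProductSpace ℝ H]
    (A : H →L[ℝ] H) (hsym : ∀ u v : H, (inner ℝ (A u) v : ℝ) = inner ℝ u (A v))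
    (lam₁ : ℝ) (hlam₁ : 0 < lam₁)
    (hcoer : ∀ u : H, lam₁ * ‖u‖ ^ 2 ≤ (inner ℝ (A u) u : ℝ))
    (M : ℝ → ℝ) (hM : ContDiff ℝ 1 M) (p : H)
    (B : H → H) (hB : ∀ u : H, B u = M (inner ℝ (A u) u : ℝ) • A u - p) :
    ∀ R > (0:ℝ), ∃ C > (0:ℝ), ∀ u₁ u₂ : H,
      ‖A u₁‖ ≤ R → ‖A u₂‖ ≤ R →
      |∫ l in (0:ℝ)..1, (inner ℝ (B (u₂ + l • (u₁ - u₂)) - B u₂) (u₁ - u₂) : ℝ)|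
        ≤ C * ‖A (u₁ - u₂)‖ * ‖u₁ - u₂‖ :=
  stmt_13_general H A lam₁ hlam₁ hcoer M hM p B hB
end

section
/- Let X be a Banach space and M a bounded closed subset of X. Assume there exists a mapping V : M → X with M ⊆ V(M) such that: (i) V is Lipschitz on M with constant L > 0, i.e. ‖Vv₁ − Vv₂‖ ≤ L ‖v₁ − v₂‖ for all v₁, v₂ ∈ M; and (ii) there exist compact seminorms n₁ and n₂ on X, a constant η ∈ (0,1), and a constant K > 0 such that ‖Vv₁ − Vv₂‖ ≤ η ‖v₁ − v₂‖ + K [n₁(v₁ − v₂) + n₂(Vv₁ − Vv₂)] for all v₁, v₂ ∈ M. Then M is a compact subset of X of finite fractal dimension; in particular there exist constants C > 0 and ε₀ > 0 such that for every ε ∈ (0, ε₀) the set M can be covered by at most (1/ε)^C closed balls of radius ε. -/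
/-- A seminorm `n` on `X` is compact if every bounded sequence has a subsequence that is
Cauchy with respect to `n`. -/
def CompactSeminorm {X : Type*} [NormedAddCommGroup X] [NormedSpace ℝ X]
    (n : Seminorm ℝ X) : Prop :=
  ∀ f : ℕ → X, Bornology.IsBounded (Set.range f) →
    ∃ φ : ℕ → ℕ, StrictMono φ ∧
      ∀ ε > (0:ℝ), ∃ N : ℕ, ∀ i ≥ N, ∀ j ≥ N, n (f (φ i) - f (φ j)) < ε

/-!
A set `P ⊆ M` of diameter `d` is mapped by `V` onto a set which splits into a bounded number of
pieces of diameter `q d`, `q = (1 + η) / 2 < 1`: two points of `P` are put in the same piece when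
`v - v₀` and `V v - V v₀` (`v₀ ∈ P` fixed) are close in `n₁` resp. `n₂` to the same points of
finite nets, which exist uniformly in `d` by compactness of the seminorms and rescaling. The
squeezing estimate then contracts each piece. As `M ⊆ V(M)`, iterating covers `M` by `N ^ k` sets
of diameter `q ^ k d₀`, so `M` is totally bounded and `k ≈ log(1/ε) / log(1/q)` gives the
polynomial bound.
-/

open Set Filter Topology Bornology Metric

section Covering

variable {α : Type*} [PseudoMetricSpace α]

def CoverableBy (M : Set α) (N : ℕ) (r : ℝ) : Prop :=
  ∃ F : Finset (Set α), F.card ≤ N ∧ (∀ Q ∈ F, ∀ x ∈ Q, ∀ y ∈ Q, dist x y ≤ r) ∧ M ⊆ ⋃₀ ↑F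

theorem coverableBy_empty (N : ℕ) (r : ℝ) : CoverableBy (∅ : Set α) N r :=
  ⟨∅, by simp, by simp, by simp⟩

theorem CoverableBy.mono_radius {M : Set α} {N : ℕ} {r r' : ℝ} (h : CoverableBy M N r)
    (hr : r ≤ r') : CoverableBy M N r' := by
  obtain ⟨F, hcard, hdiam, hcov⟩ := h
  exact ⟨F, hcard, fun Q hQ x hx y hy => (hdiam Q hQ x hx y hy).trans hr, hcov⟩

theorem CoverableBy.exists_finset_closedBall {M : Set α} {N : ℕ} {r : ℝ}
    (h : CoverableBy M N r) : ∃ S : Finset α, S.card ≤ N ∧ M ⊆ ⋃ x ∈ S, closedBall x r := by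
  classical
  obtain ⟨F, hcard, hdiam, hcov⟩ := h
  cases isEmpty_or_nonempty α
  · exact ⟨∅, by simp, fun x => isEmptyElim x⟩
  refine ⟨F.image fun Q => Classical.epsilon (· ∈ Q), Finset.card_image_le.trans hcard, ?_⟩
  intro x hx
  obtain ⟨Q, hQ, hxQ⟩ := hcov hx
  exact mem_biUnion (Finset.mem_image_of_mem _ hQ)
    (hdiam Q hQ x hxQ _ (Classical.epsilon_spec ⟨x, hxQ⟩))

theorem totallyBounded_of_forall_coverableBy {M : Set α}
    (h : ∀ r > 0, ∃ N, CoverableBy M N r) : TotallyBounded M := by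
  refine totallyBounded_iff.2 fun ε hε => ?_
  obtain ⟨N, hN⟩ := h (ε / 2) (half_pos hε)
  obtain ⟨S, -, hS⟩ := hN.exists_finset_closedBall
  exact ⟨S, S.finite_toSet, hS.trans <| iUnion₂_mono fun x _ =>
    closedBall_subset_ball (half_lt_self hε)⟩

theorem coverableBy_pow_of_coverableBy_image {M : Set α} {V : α → α} (hMV : M ⊆ V '' M)
    {N : ℕ} {q d₀ : ℝ} (hq : 0 < q) (hd₀ : 0 < d₀) (hM : ∀ x ∈ M, ∀ y ∈ M, dist x y ≤ d₀)
    (hV : ∀ d > 0, ∀ P ⊆ M, (∀ x ∈ P, ∀ y ∈ P, dist x y ≤ d) → CoverableBy (V '' P) N (q * d))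
    (k : ℕ) : CoverableBy M (N ^ k) (q ^ k * d₀) := by
  classical
  induction k with
  | zero => exact ⟨{M}, by simp, by simpa using hM, by simp⟩
  | succ k ih =>
    obtain ⟨F, hcard, hdiam, hcov⟩ := ih
    have hpiece : ∀ P ∈ F, CoverableBy (V '' (P ∩ M)) N (q * (q ^ k * d₀)) :=
      fun P hP => hV _ (by positivity) _ inter_subset_right
        fun x hx y hy => hdiam P hP x hx.1 y hy.1
    choose! G hGcard hGdiam hGcov using hpiece
    refine ⟨F.biUnion G, ?_, ?_, ?_⟩
    · calc (F.biUnion G).card ≤ ∑ P ∈ F, (G P).card := Finset.card_biUnion_le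
        _ ≤ F.card * N := Finset.sum_le_card_nsmul _ _ _ hGcard
        _ ≤ N ^ (k + 1) := by rw [pow_succ]; gcongr
    · intro Q hQ
      obtain ⟨P, hP, hQP⟩ := Finset.mem_biUnion.1 hQ
      rw [pow_succ, mul_comm _ q, mul_assoc]
      exact hGdiam P hP Q hQP
    · intro x hx
      obtain ⟨w, hwM, rfl⟩ := hMV hx
      obtain ⟨P, hP, hwP⟩ := hcov hwM
      obtain ⟨Q, hQ, hxQ⟩ := hGcov P hP ⟨w, ⟨hwP, hwM⟩, rfl⟩
      exact ⟨Q, Finset.mem_biUnion.2 ⟨P, hP, hQ⟩, hxQ⟩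

end Covering

theorem exists_pow_le_one_div_rpow {q d₀ : ℝ} (hq0 : 0 < q) (hq1 : q < 1) (hd₀ : 1 ≤ d₀)
    (N : ℕ) : ∃ C > (0 : ℝ), ∃ ε₀ > (0 : ℝ), ∀ ε ∈ Ioo (0 : ℝ) ε₀,
      ∃ k : ℕ, q ^ k * d₀ ≤ ε ∧ (N : ℝ) ^ k ≤ (1 / ε) ^ C := by
  set ℓ := -Real.log q
  have hℓ : 0 < ℓ := neg_pos.2 (Real.log_neg hq0 hq1)
  have hN : 0 ≤ Real.log (N + 1) := Real.log_nonneg (by linarith [N.cast_nonneg (α := ℝ)])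
  have hd₀' : 0 ≤ Real.log d₀ := Real.log_nonneg hd₀
  set C₀ := Real.log (N + 1) / ℓ * (Real.log d₀ + 1) + Real.log (N + 1)
  have hC₀ : 0 ≤ C₀ := by positivity
  refine ⟨C₀ + 1, by linarith, Real.exp (-1), Real.exp_pos _, fun ε ⟨hε0, hε⟩ => ?_⟩
  set s := -Real.log ε
  have hs : 1 < s := by
    have := Real.log_lt_log hε0 hε
    rw [Real.log_exp] at this
    linarith
  -- `x = log (d₀ / ε) / log (1 / q)` solves `q ^ x * d₀ = ε`.
  set x := (Real.log d₀ + s) / ℓ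
  have hx : 0 ≤ x := div_nonneg (by linarith) hℓ.le
  have hxℓ : x * ℓ = Real.log d₀ + s := div_mul_cancel₀ _ hℓ.ne'
  refine ⟨⌈x⌉₊, ?_, ?_⟩
  · rw [← Real.log_le_log_iff (by positivity) hε0, Real.log_mul (by positivity) (by positivity),
      Real.log_pow]
    have := mul_le_mul_of_nonneg_right (Nat.le_ceil x) hℓ.le
    linarith
  · have hk : (⌈x⌉₊ : ℝ) * Real.log (N + 1) ≤ (C₀ + 1) * s :=
      calc (⌈x⌉₊ : ℝ) * Real.log (N + 1) ≤ (x + 1) * Real.log (N + 1) := by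
            gcongr; exact (Nat.ceil_lt_add_one hx).le
        _ = Real.log (N + 1) / ℓ * (Real.log d₀ + s) + Real.log (N + 1) := by ring
        _ ≤ Real.log (N + 1) / ℓ * ((Real.log d₀ + 1) * s) + Real.log (N + 1) * s := by
            gcongr
            · nlinarith
            · exact le_mul_of_one_le_right hN hs.le
        _ ≤ (C₀ + 1) * s := by nlinarith
    calc (N : ℝ) ^ ⌈x⌉₊ ≤ (N + 1) ^ ⌈x⌉₊ := by gcongr; linarith
      _ = Real.exp (⌈x⌉₊ * Real.log (N + 1)) := by
          rw [← Real.log_pow, Real.exp_log (by positivity)]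
      _ ≤ Real.exp ((C₀ + 1) * s) := Real.exp_le_exp.2 hk
      _ = (1 / ε) ^ (C₀ + 1) := by
          rw [Real.rpow_def_of_pos (by positivity), one_div, Real.log_inv, mul_comm]

section Squeezing

variable {X : Type*} [NormedAddCommGroup X] [NormedSpace ℝ X]

theorem CompactSeminorm.exists_finset_lt {n : Seminorm ℝ X} (hn : CompactSeminorm n)
    {B : Set X} (hB : IsBounded B) {δ : ℝ} (hδ : 0 < δ) :
    ∃ T : Finset X, ∀ x ∈ B, ∃ t ∈ T, n (x - t) < δ := by
  by_contra! h
  obtain ⟨f, hfB, hsep⟩ := exists_seq_of_forall_finset_exists (· ∈ B)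
    (fun x y => δ ≤ n (y - x)) fun T _ => h T
  obtain ⟨φ, hφ, hcauchy⟩ := hn f (hB.subset (range_subset_iff.2 hfB))
  obtain ⟨m, hm⟩ := hcauchy δ hδ
  exact (hm (m + 1) m.le_succ m le_rfl).not_ge (hsep _ _ (hφ m.lt_succ_self))

theorem CompactSeminorm.exists_finset_lt_smul {n : Seminorm ℝ X} (hn : CompactSeminorm n)
    (c : ℝ) {θ : ℝ} (hθ : 0 < θ) :
    ∃ T : Finset X, ∀ r > 0, ∀ x, ‖x‖ ≤ c * r → ∃ t ∈ T, n (x - r • t) < θ * r := by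
  obtain ⟨T, hT⟩ := hn.exists_finset_lt isBounded_closedBall hθ (B := closedBall 0 c)
  refine ⟨T, fun r hr x hx => ?_⟩
  have hx' : r⁻¹ • x ∈ closedBall (0 : X) c := by
    rw [mem_closedBall_zero_iff, norm_smul, Real.norm_of_nonneg (inv_nonneg.2 hr.le),
      inv_mul_le_iff₀ hr, mul_comm]
    exact hx
  obtain ⟨t, ht, hxt⟩ := hT _ hx'
  refine ⟨t, ht, ?_⟩
  rw [show x - r • t = r • (r⁻¹ • x - t) by rw [smul_sub, smul_inv_smul₀ hr.ne'],
    map_smul_eq_mul, Real.norm_of_nonneg hr.le, mul_comm θ]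
  exact mul_lt_mul_of_pos_left hxt hr

theorem Seminorm.map_sub_le_of_lt {n : Seminorm ℝ X} {x y z : X} {δ : ℝ} (hx : n (x - z) < δ)
    (hy : n (y - z) < δ) : n (x - y) ≤ 2 * δ := by
  calc n (x - y) = n ((x - z) - (y - z)) := by rw [sub_sub_sub_cancel_right]
    _ ≤ n (x - z) + n (y - z) := map_sub_le_add n _ _
    _ ≤ 2 * δ := by linarith

theorem exists_coverableBy_image_of_squeezing {M : Set X} {V : X → X} {L η K : ℝ}
    {n₁ n₂ : Seminorm ℝ X} (hn₁ : CompactSeminorm n₁) (hn₂ : CompactSeminorm n₂)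
    (hL : 0 ≤ L) (hη0 : 0 ≤ η) (hη1 : η < 1) (hK : 0 < K)
    (hLip : ∀ v₁ ∈ M, ∀ v₂ ∈ M, ‖V v₁ - V v₂‖ ≤ L * ‖v₁ - v₂‖)
    (hest : ∀ v₁ ∈ M, ∀ v₂ ∈ M,
      ‖V v₁ - V v₂‖ ≤ η * ‖v₁ - v₂‖ + K * (n₁ (v₁ - v₂) + n₂ (V v₁ - V v₂))) :
    ∃ N : ℕ, ∀ d > 0, ∀ P ⊆ M, (∀ x ∈ P, ∀ y ∈ P, dist x y ≤ d) →
      CoverableBy (V '' P) N ((1 + η) / 2 * d) := by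
  classical
  -- `θ` is chosen so that the seminorm terms contribute `4 K θ d = (1 - η) d / 2`.
  set θ := (1 - η) / (8 * K) with hθ_def
  have hθ : 0 < θ := div_pos (by linarith) (by positivity)
  obtain ⟨T₁, hT₁⟩ := hn₁.exists_finset_lt_smul 1 hθ
  obtain ⟨T₂, hT₂⟩ := hn₂.exists_finset_lt_smul L hθ
  refine ⟨T₁.card * T₂.card, fun d hd P hPM hP => ?_⟩
  rcases P.eq_empty_or_nonempty with rfl | ⟨c, hc⟩
  · simpa using coverableBy_empty _ _
  let piece : X × X → Set X := fun t => V '' {x ∈ P |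
    n₁ (x - c - d • t.1) < θ * d ∧ n₂ (V x - V c - d • t.2) < θ * d}
  refine ⟨(T₁ ×ˢ T₂).image piece, Finset.card_image_le.trans (Finset.card_product _ _).le,
    ?_, ?_⟩
  · intro Q hQ
    obtain ⟨t, -, rfl⟩ := Finset.mem_image.1 hQ
    rintro _ ⟨x, ⟨hxP, hx₁, hx₂⟩, rfl⟩ _ ⟨y, ⟨hyP, hy₁, hy₂⟩, rfl⟩
    have hxy := hP x hxP y hyP
    rw [dist_eq_norm] at hxy ⊢
    calc ‖V x - V y‖ ≤ η * ‖x - y‖ + K * (n₁ (x - y) + n₂ (V x - V y)) :=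
          hest x (hPM hxP) y (hPM hyP)
      _ ≤ η * d + K * (2 * (θ * d) + 2 * (θ * d)) := by
          gcongr
          · exact Seminorm.map_sub_le_of_lt (by rwa [sub_sub] at hx₁) (by rwa [sub_sub] at hy₁)
          · exact Seminorm.map_sub_le_of_lt (by rwa [sub_sub] at hx₂) (by rwa [sub_sub] at hy₂)
      _ = (1 + η) / 2 * d := by rw [hθ_def]; field_simp; ring
  · rintro _ ⟨x, hxP, rfl⟩
    have hxc : ‖x - c‖ ≤ d := by rw [← dist_eq_norm]; exact hP x hxP c hc
    obtain ⟨a, ha, hxa⟩ := hT₁ d hd (x - c) (by rwa [one_mul])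
    obtain ⟨b, hb, hxb⟩ := hT₂ d hd (V x - V c)
      ((hLip x (hPM hxP) c (hPM hc)).trans (by gcongr))
    exact ⟨piece (a, b), Finset.mem_image_of_mem _ (Finset.mem_product.2 ⟨ha, hb⟩),
      x, ⟨hxP, hxa, hxb⟩, rfl⟩

end Squeezing

/-- Generalized Ladyzhenskaya theorem: if a bounded closed set `M ⊆ V(M)` admits a
Lipschitz map `V` satisfying the squeezing estimate
`‖Vv₁ − Vv₂‖ ≤ η‖v₁ − v₂‖ + K[n₁(v₁ − v₂) + n₂(Vv₁ − Vv₂)]` with `η ∈ (0,1)` and compact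
seminorms `n₁, n₂`, then `M` is compact of finite fractal dimension: for some `C, ε₀ > 0`
and all `ε ∈ (0, ε₀)`, `M` is covered by at most `(1/ε)^C` closed balls of radius `ε`. -/
theorem stmt_16
    (X : Type*) [NormedAddCommGroup X] [NormedSpace ℝ X] [CompleteSpace X]
    (M : Set X) (hMb : Bornology.IsBounded M) (hMc : IsClosed M)
    (V : X → X) (hMV : M ⊆ V '' M)
    (L : ℝ) (hL : 0 < L)
    (hLip : ∀ v₁ ∈ M, ∀ v₂ ∈ M, ‖V v₁ - V v₂‖ ≤ L * ‖v₁ - v₂‖)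
    (n₁ n₂ : Seminorm ℝ X) (hn₁ : CompactSeminorm n₁) (hn₂ : CompactSeminorm n₂)
    (η K : ℝ) (hη : η ∈ Set.Ioo (0:ℝ) 1) (hK : 0 < K)
    (hest : ∀ v₁ ∈ M, ∀ v₂ ∈ M,
      ‖V v₁ - V v₂‖ ≤ η * ‖v₁ - v₂‖ + K * (n₁ (v₁ - v₂) + n₂ (V v₁ - V v₂))) :
    IsCompact M ∧
    ∃ C > (0:ℝ), ∃ ε₀ > (0:ℝ), ∀ ε ∈ Set.Ioo (0:ℝ) ε₀,
      ∃ S : Finset X, (S.card : ℝ) ≤ (1 / ε) ^ C ∧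
        M ⊆ ⋃ x ∈ S, Metric.closedBall x ε := by
  obtain ⟨N, hN⟩ := exists_coverableBy_image_of_squeezing hn₁ hn₂ hL.le hη.1.le hη.2 hK hLip hest
  obtain ⟨D, hD⟩ := isBounded_iff.1 hMb
  have hq0 : 0 < (1 + η) / 2 := by linarith [hη.1]
  have hq1 : (1 + η) / 2 < 1 := by linarith [hη.2]
  have hcov (k : ℕ) : CoverableBy M (N ^ k) (((1 + η) / 2) ^ k * max D 1) :=
    coverableBy_pow_of_coverableBy_image hMV hq0 (by positivity)
      (fun x hx y hy => (hD hx hy).trans (le_max_left D 1)) hN k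
  have hlim : Tendsto (fun k : ℕ => ((1 + η) / 2) ^ k * max D 1) atTop (𝓝 0) := by
    simpa using (tendsto_pow_atTop_nhds_zero_of_lt_one hq0.le hq1).mul_const (max D 1)
  refine ⟨(totallyBounded_of_forall_coverableBy fun r hr => ?_).isCompact_of_isClosed hMc, ?_⟩
  · obtain ⟨k, hk⟩ := (hlim.eventually (gt_mem_nhds hr)).exists
    exact ⟨_, (hcov k).mono_radius hk.le⟩
  obtain ⟨C, hC, ε₀, hε₀, hCε⟩ := exists_pow_le_one_div_rpow hq0 hq1 (le_max_right D 1) N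
  refine ⟨C, hC, ε₀, hε₀, fun ε hε => ?_⟩
  obtain ⟨k, hkε, hkC⟩ := hCε ε hε
  obtain ⟨S, hS, hMS⟩ := ((hcov k).mono_radius hkε).exists_finset_closedBall
  exact ⟨S, (Nat.cast_le.2 hS).trans (by push_cast; exact hkC), hMS⟩
end

section
/- Let X be a complete metric space with metric d and (X, S_t) a dynamical system. Assume that for every bounded positively invariant set B ⊆ X there exist T > 0, q ∈ (0,1), and a pseudometric ρ on the space C([0,T]; X) of continuous X-valued paths such that: (i) ρ is precompact with respect to X, meaning every sequence (x_n) ⊆ B has a subsequence (x_{n_k}) such that the paths y_k : τ ↦ S_τ x_{n_k} form a Cauchy sequence with respect to ρ; and (ii) for all y₁, y₂ ∈ B, d(S_T y₁, S_T y₂) ≤ q · d(y₁, y₂) + ρ({S_τ y₁}, {S_τ y₂}), where {S_τ y_i} denotes the path τ ↦ S_τ y_i in C([0,T]; X). Then (X, S_t) is asymptotically smooth. -/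
open Filter

/-- A dynamical system on a metric space: a semigroup of maps `S t`, `t ≥ 0`, with
`S 0 = id`, `S (t+s) = S t ∘ S s`, and joint continuity in `(t, x)` on `[0,∞) × X`. -/
def IsDynSys {X : Type*} [MetricSpace X] (S : ℝ → X → X) : Prop :=
  (∀ x : X, S 0 x = x) ∧
  (∀ t ≥ (0:ℝ), ∀ s ≥ (0:ℝ), ∀ x : X, S (t + s) x = S t (S s x)) ∧
  ContinuousOn (fun p : ℝ × X => S p.1 p.2) (Set.Ici 0 ×ˢ Set.univ)

/-- The set `K` uniformly attracts the set `D` under the dynamics `S`. -/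
def Attracts {X : Type*} [MetricSpace X] (S : ℝ → X → X) (D K : Set X) : Prop :=
  ∀ ε > (0:ℝ), ∃ T : ℝ, ∀ t ≥ T, ∀ U ∈ D, Metric.infDist (S t U) K < ε

/-- The dynamical system `S` is asymptotically smooth. -/
def AsymptoticallySmooth {X : Type*} [MetricSpace X] (S : ℝ → X → X) : Prop :=
  ∀ D : Set X, Bornology.IsBounded D → (∀ t ≥ (0:ℝ), S t '' D ⊆ D) →
    ∃ K : Set X, K ⊆ closure D ∧ IsCompact K ∧ Attracts S D K

/-!
Iterating `d(S_T y₁, S_T y₂) ≤ q d(y₁, y₂) + ρ(…)` along `0, T, …, jT` inside the invariant set `D`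
bounds `d(S_{jT} a, S_{jT} b)` by `q^j diam D + (1 - q)⁻¹ max_{l < j} ρ(S_{lT} a, S_{lT} b)`.
Precompactness of `ρ` gives a finite `ρ`-net for the trajectories of points of `D`; sorting the
points of `D` by the net points near their first `j` discrete iterates splits `S_{jT} D`, and hence
every later tail `⋃_{t ≥ jT} S_t D`, into finitely many pieces of small diameter. In the complete
space `X` this makes the ω-limit set of `D` compact, and it attracts `D` because every sequence
`S_{tₙ} uₙ` with `tₙ → ∞` has a convergent subsequence.
-/

open Filter Topology Metric Set
open scoped omegaLimit

/-- The Kuratowski measure of noncompactness of the tails `⋃_{t ≥ s} S_t D` tends to `0`. -/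
def AsymptoticallyTotallyBounded {X : Type*} [MetricSpace X] (S : ℝ → X → X) (D : Set X) :
    Prop :=
  ∀ ε > 0, ∃ s, ∃ c : Set X, c.Finite ∧ image2 S (Ici s) D ⊆ ⋃ y ∈ c, ball y ε

section OmegaLimit

variable {X : Type*} [MetricSpace X] {S : ℝ → X → X} {D : Set X}

theorem mem_omegaLimit_of_tendsto {u : ℕ → X} {t : ℕ → ℝ} {x : X} (hu : ∀ n, u n ∈ D)
    (ht : Tendsto t atTop atTop) (hx : Tendsto (fun n => S (t n) (u n)) atTop (𝓝 x)) :
    x ∈ ω⁺ S D :=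
  (mem_omegaLimit_iff_frequently _ _ _ x).2 fun _ hN =>
    ht.frequently ((hx.eventually_mem hN).mono fun n hn => ⟨u n, hu n, hn⟩).frequently

theorem omegaLimit_subset_closure (hD : ∀ t ≥ (0:ℝ), S t '' D ⊆ D) : ω⁺ S D ⊆ closure D := by
  refine (omegaLimit_subset_closure_image2 _ _ _ (Ici_mem_atTop 0)).trans (closure_mono ?_)
  rintro _ ⟨t, ht, u, hu, rfl⟩
  exact hD t ht ⟨u, hu, rfl⟩

namespace AsymptoticallyTotallyBounded

theorem of_image
    (hsemi : ∀ t ≥ (0:ℝ), ∀ s ≥ (0:ℝ), ∀ x, S (t + s) x = S t (S s x))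
    (hD : ∀ t ≥ (0:ℝ), S t '' D ⊆ D)
    (h : ∀ ε > 0, ∃ s ≥ (0:ℝ), ∃ c : Set X, c.Finite ∧ S s '' D ⊆ ⋃ y ∈ c, ball y ε) :
    AsymptoticallyTotallyBounded S D := by
  intro ε hε
  obtain ⟨s, hs, c, hc, hcover⟩ := h ε hε
  refine ⟨s, c, hc, ?_⟩
  rintro _ ⟨t, ht, u, hu, rfl⟩
  have hshift : 0 ≤ t - s := sub_nonneg.2 ht
  refine hcover ⟨S (t - s) u, hD _ hshift ⟨u, hu, rfl⟩, ?_⟩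
  rw [← hsemi s hs _ hshift, add_sub_cancel]

theorem totallyBounded_omegaLimit (hD : AsymptoticallyTotallyBounded S D) :
    TotallyBounded (ω⁺ S D) := by
  refine totallyBounded_iff.2 fun ε hε => ?_
  obtain ⟨s, c, hc, hcover⟩ := hD (ε / 2) (half_pos hε)
  refine ⟨c, hc, fun x hx => ?_⟩
  obtain ⟨z, hz, hxz⟩ := mem_closure_iff.1
    (omegaLimit_subset_closure_image2 _ _ _ (Ici_mem_atTop s) hx) (ε / 2) (half_pos hε)
  obtain ⟨y, hy, hzy⟩ := mem_iUnion₂.1 (hcover hz)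
  refine mem_iUnion₂.2 ⟨y, hy, ?_⟩
  rw [mem_ball] at hzy ⊢
  linarith [dist_triangle x z y]

theorem isCompact_omegaLimit [CompleteSpace X] (hD : AsymptoticallyTotallyBounded S D) :
    IsCompact (ω⁺ S D) :=
  hD.totallyBounded_omegaLimit.isCompact_of_isClosed (isClosed_omegaLimit _ _ _)

theorem totallyBounded_range (hD : AsymptoticallyTotallyBounded S D) {u : ℕ → X} {t : ℕ → ℝ}
    (hu : ∀ n, u n ∈ D) (ht : Tendsto t atTop atTop) :
    TotallyBounded (range fun n => S (t n) (u n)) := by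
  refine totallyBounded_iff.2 fun ε hε => ?_
  obtain ⟨s, c, hc, hcover⟩ := hD ε hε
  obtain ⟨N, hN⟩ := eventually_atTop.1 (ht.eventually_ge_atTop s)
  refine ⟨c ∪ (fun n => S (t n) (u n)) '' Iio N, hc.union ((finite_Iio N).image _), ?_⟩
  rintro _ ⟨n, rfl⟩
  rcases lt_or_ge n N with hn | hn
  · exact mem_iUnion₂.2 ⟨_, Or.inr ⟨n, hn, rfl⟩, mem_ball_self hε⟩
  · obtain ⟨y, hy, hny⟩ := mem_iUnion₂.1 (hcover ⟨t n, hN n hn, u n, hu n, rfl⟩)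
    exact mem_iUnion₂.2 ⟨y, Or.inl hy, hny⟩

theorem exists_mem_omegaLimit_tendsto_subseq [CompleteSpace X]
    (hD : AsymptoticallyTotallyBounded S D) {u : ℕ → X} {t : ℕ → ℝ} (hu : ∀ n, u n ∈ D)
    (ht : Tendsto t atTop atTop) :
    ∃ x ∈ ω⁺ S D, ∃ φ : ℕ → ℕ, StrictMono φ ∧
      Tendsto (fun k => S (t (φ k)) (u (φ k))) atTop (𝓝 x) := by
  obtain ⟨x, -, φ, hφ, hx⟩ :=
    ((hD.totallyBounded_range hu ht).closure.isCompact_of_isClosed isClosed_closure).tendsto_subseq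
      fun n => subset_closure (mem_range_self n)
  exact ⟨x, mem_omegaLimit_of_tendsto (fun k => hu (φ k)) (ht.comp hφ.tendsto_atTop) hx, φ, hφ, hx⟩

theorem attracts_omegaLimit [CompleteSpace X] (hD : AsymptoticallyTotallyBounded S D) :
    Attracts S D (ω⁺ S D) := by
  intro ε hε
  by_contra! hfar
  choose t ht u hu hfar using fun n : ℕ => hfar n
  obtain ⟨x, hx, φ, -, hlim⟩ :=
    hD.exists_mem_omegaLimit_tendsto_subseq hu (tendsto_atTop_mono ht tendsto_natCast_atTop_atTop)
  obtain ⟨k, hk⟩ := (hlim.eventually (ball_mem_nhds x hε)).exists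
  exact (hfar (φ k)).not_gt ((infDist_le_dist_of_mem hx).trans_lt hk)

end AsymptoticallyTotallyBounded

end OmegaLimit

theorem le_pow_mul_add_div_of_le_mul_add {d : ℕ → ℝ} {q M : ℝ} (hq0 : 0 ≤ q) (hq1 : q < 1)
    (hM : 0 ≤ M) {j : ℕ} (h : ∀ l < j, d (l + 1) ≤ q * d l + M) :
    d j ≤ q ^ j * d 0 + M / (1 - q) := by
  have h1q : 0 < 1 - q := sub_pos.2 hq1
  induction j with
  | zero => simpa using div_nonneg hM h1q.le
  | succ j ih =>
    calc d (j + 1) ≤ q * d j + M := h j j.lt_succ_self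
      _ ≤ q * (q ^ j * d 0 + M / (1 - q)) + M := by
        gcongr
        exact ih fun l hl => h l (hl.trans j.lt_succ_self)
      _ = q ^ (j + 1) * d 0 + M / (1 - q) := by field_simp; ring

theorem exists_finset_forall_lt_of_forall_exists_cauchy_subseq {α : Type*} {D : Set α}
    {d : α → α → ℝ}
    (h : ∀ x : ℕ → α, (∀ n, x n ∈ D) → ∃ φ : ℕ → ℕ, StrictMono φ ∧
      ∀ ε > (0:ℝ), ∃ N, ∀ i ≥ N, ∀ j ≥ N, d (x (φ i)) (x (φ j)) < ε)
    {δ : ℝ} (hδ : 0 < δ) : ∃ s : Finset α, ∀ x ∈ D, ∃ y ∈ s, d x y < δ := by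
  by_contra! hsep
  obtain ⟨x, hxD, hx⟩ :=
    exists_seq_of_forall_finset_exists (· ∈ D) (fun y x => δ ≤ d x y) fun s _ => hsep s
  obtain ⟨φ, hφ, hcauchy⟩ := h x hxD
  obtain ⟨N, hN⟩ := hcauchy δ hδ
  exact (hx _ _ (hφ N.lt_succ_self)).not_gt (hN (N + 1) N.le_succ N le_rfl)

theorem exists_finite_cover_range_of_discretization {X α β : Type*} [MetricSpace X] [Finite β]
    {f : α → X} (F : α → β) {ε : ℝ} (hF : ∀ a b, F a = F b → dist (f a) (f b) < ε) :
    ∃ c : Set X, c.Finite ∧ range f ⊆ ⋃ y ∈ c, ball y ε := by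
  choose g hg using fun b : range F => b.2
  refine ⟨range (f ∘ g), finite_range _, ?_⟩
  rintro _ ⟨a, rfl⟩
  exact mem_iUnion₂.2 ⟨_, mem_range_self ⟨F a, a, rfl⟩, hF _ _ (hg ⟨F a, a, rfl⟩).symm⟩

section Criterion

variable {X : Type*} [MetricSpace X] {S : ℝ → X → X} {D : Set X} {T q : ℝ}
  {ρ : (ℝ → X) → (ℝ → X) → ℝ}

theorem dist_apply_nat_mul_le (hS0 : ∀ x, S 0 x = x)
    (hsemi : ∀ t ≥ (0:ℝ), ∀ s ≥ (0:ℝ), ∀ x, S (t + s) x = S t (S s x))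
    (hD : ∀ t ≥ (0:ℝ), S t '' D ⊆ D) (hT : 0 ≤ T) (hq0 : 0 ≤ q) (hq1 : q < 1)
    (hcontr : ∀ y₁ ∈ D, ∀ y₂ ∈ D, dist (S T y₁) (S T y₂) ≤
      q * dist y₁ y₂ + ρ (fun τ => S τ y₁) (fun τ => S τ y₂))
    {a b : X} (ha : a ∈ D) (hb : b ∈ D) {M : ℝ} (hM : 0 ≤ M) {j : ℕ}
    (hρ : ∀ l < j, ρ (fun τ => S τ (S (l * T) a)) (fun τ => S τ (S (l * T) b)) ≤ M) :
    dist (S (j * T) a) (S (j * T) b) ≤ q ^ j * dist a b + M / (1 - q) := by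
  have hstep : ∀ (l : ℕ) x, S ((l + 1 : ℕ) * T) x = S T (S (l * T) x) := fun l x => by
    rw [← hsemi T hT (l * T) (by positivity)]
    push_cast
    ring_nf
  have hmem : ∀ (l : ℕ), ∀ x ∈ D, S (l * T) x ∈ D := fun l x hx =>
    hD _ (by positivity) ⟨x, hx, rfl⟩
  have := le_pow_mul_add_div_of_le_mul_add
    (d := fun l : ℕ => dist (S (l * T) a) (S (l * T) b)) hq0 hq1 hM fun l hl => by
      rw [hstep, hstep]
      exact (hcontr _ (hmem l a ha) _ (hmem l b hb)).trans (by linarith [hρ l hl])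
  simpa [hS0] using this

theorem exists_finite_cover_image_of_dist_le_mul_add (hS0 : ∀ x, S 0 x = x)
    (hsemi : ∀ t ≥ (0:ℝ), ∀ s ≥ (0:ℝ), ∀ x, S (t + s) x = S t (S s x))
    (hD : ∀ t ≥ (0:ℝ), S t '' D ⊆ D) (hDb : Bornology.IsBounded D) (hT : 0 ≤ T)
    (hq0 : 0 ≤ q) (hq1 : q < 1)
    (hρsymm : ∀ y₁ y₂, ρ y₁ y₂ = ρ y₂ y₁) (hρtri : ∀ y₁ y₂ y₃, ρ y₁ y₃ ≤ ρ y₁ y₂ + ρ y₂ y₃)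
    (hprec : ∀ x : ℕ → X, (∀ m, x m ∈ D) → ∃ φ : ℕ → ℕ, StrictMono φ ∧
      ∀ ε > (0:ℝ), ∃ N : ℕ, ∀ i ≥ N, ∀ j ≥ N,
        ρ (fun τ => S τ (x (φ i))) (fun τ => S τ (x (φ j))) < ε)
    (hcontr : ∀ y₁ ∈ D, ∀ y₂ ∈ D, dist (S T y₁) (S T y₂) ≤
      q * dist y₁ y₂ + ρ (fun τ => S τ y₁) (fun τ => S τ y₂))
    {ε : ℝ} (hε : 0 < ε) :
    ∃ s ≥ (0:ℝ), ∃ c : Set X, c.Finite ∧ S s '' D ⊆ ⋃ y ∈ c, ball y ε := by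
  obtain ⟨R, hR⟩ := isBounded_iff.1 hDb
  obtain ⟨j, hj⟩ : ∃ j : ℕ, q ^ j * R < ε / 2 :=
    (((tendsto_pow_atTop_nhds_zero_of_lt_one hq0 hq1).mul_const R).eventually
      (gt_mem_nhds (by simpa using half_pos hε))).exists
  set M := (1 - q) * ε / 2 with hM_def
  have hM : 0 < M := div_pos (mul_pos (sub_pos.2 hq1) hε) two_pos
  have hMq : M / (1 - q) = ε / 2 := by
    rw [hM_def]
    field_simp [(sub_pos.2 hq1).ne']
  obtain ⟨net, hnet⟩ := exists_finset_forall_lt_of_forall_exists_cauchy_subseq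
    (d := fun x y => ρ (fun τ => S τ x) (fun τ => S τ y)) hprec (half_pos hM)
  choose code hcode_mem hcode using fun (x : D) (l : Fin j) =>
    hnet _ (hD (l * T) (by positivity) ⟨x, x.2, rfl⟩)
  refine ⟨j * T, by positivity, ?_⟩
  rw [image_eq_range]
  refine exists_finite_cover_range_of_discretization
    (fun x l => (⟨code x l, hcode_mem x l⟩ : net)) fun a b hab => ?_
  have hclose : ∀ l < j,
      ρ (fun τ => S τ (S (l * T) a)) (fun τ => S τ (S (l * T) b)) ≤ M := fun l hl => by
    have hab_l : code a ⟨l, hl⟩ = code b ⟨l, hl⟩ := congrArg Subtype.val (congrFun hab ⟨l, hl⟩)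
    have ha := hcode a ⟨l, hl⟩
    have hb := hcode b ⟨l, hl⟩
    rw [← hab_l, hρsymm] at hb
    linarith [hρtri (fun τ => S τ (S (l * T) a)) (fun τ => S τ (code a ⟨l, hl⟩))
      (fun τ => S τ (S (l * T) b))]
  calc dist (S (j * T) a) (S (j * T) b)
      ≤ q ^ j * dist (a : X) b + M / (1 - q) :=
        dist_apply_nat_mul_le hS0 hsemi hD hT hq0 hq1 hcontr a.2 b.2 hM.le hclose
    _ ≤ q ^ j * R + ε / 2 := by
        rw [hMq]
        gcongr
        exact hR a.2 b.2
    _ < ε := by linarith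

end Criterion

/-- Criterion for asymptotic smoothness: if for every bounded positively invariant `B`
there are `T > 0`, `q ∈ (0,1)` and a precompact pseudometric `ρ` on paths such that
`dist(S_T y₁, S_T y₂) ≤ q dist(y₁,y₂) + ρ({S_τ y₁},{S_τ y₂})` on `B`, then the system
is asymptotically smooth. -/
theorem stmt_18
    (X : Type*) [MetricSpace X] [CompleteSpace X]
    (S : ℝ → X → X) (hS : IsDynSys S)
    (hcrit : ∀ B : Set X, Bornology.IsBounded B → (∀ t ≥ (0:ℝ), S t '' B ⊆ B) →
      ∃ T > (0:ℝ), ∃ q ∈ Set.Ioo (0:ℝ) 1, ∃ ρ : (ℝ → X) → (ℝ → X) → ℝ,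
        (∀ y₁ y₂, 0 ≤ ρ y₁ y₂) ∧
        (∀ y₁ y₂, ρ y₁ y₂ = ρ y₂ y₁) ∧
        (∀ y, ρ y y = 0) ∧
        (∀ y₁ y₂ y₃, ρ y₁ y₃ ≤ ρ y₁ y₂ + ρ y₂ y₃) ∧
        (∀ x : ℕ → X, (∀ m, x m ∈ B) →
          ∃ φ : ℕ → ℕ, StrictMono φ ∧
            ∀ ε > (0:ℝ), ∃ N : ℕ, ∀ i ≥ N, ∀ j ≥ N,
              ρ (fun τ => S τ (x (φ i))) (fun τ => S τ (x (φ j))) < ε) ∧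
        (∀ y₁ ∈ B, ∀ y₂ ∈ B,
          dist (S T y₁) (S T y₂) ≤ q * dist y₁ y₂ +
            ρ (fun τ => S τ y₁) (fun τ => S τ y₂))) :
    AsymptoticallySmooth S := by
  intro D hDb hD
  obtain ⟨T, hT, q, hq, ρ, -, hρsymm, -, hρtri, hprec, hcontr⟩ := hcrit D hDb hD
  have htails : AsymptoticallyTotallyBounded S D :=
    .of_image hS.2.1 hD fun _ hε => exists_finite_cover_image_of_dist_le_mul_add hS.1 hS.2.1 hD hDb hT.le hq.1.le
      hq.2 hρsymm hρtri hprec hcontr hε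
  exact ⟨ω⁺ S D, omegaLimit_subset_closure hD, htails.isCompact_omegaLimit,
    htails.attracts_omegaLimit⟩
end
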